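/- arXiv:2204.00611 — 3 statements merged into one kernel-verified Lean document; each statement's English description precedes it below -/
import Mathlib

section
/- The signature of a path is invariant under reparametrization: if X : [0,T] → ℝ^d is continuously differentiable and φ : [0,T] → [0,T] is a continuously differentiable increasing bijection, then every iterated integral of X ∘ φ over (0,T) equals the corresponding iterated integral of X over (0,T). -/
open intervalIntegral

/-- Coordinate model of the tensor power `(ℝ^d)^{⊗ n}`. -/
def Tensor (d n : ℕ) : Type := (Fin n → Fin d) → ℝ

/-- The `n`-th level of the signature of a path `X : ℝ → ℝ^d` over `(s, t)`,
in coordinates: `sig X s n t f` is the iterated integral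
`∫_{s < s₁ < ⋯ < sₙ < t} dX^{f 1}_{s₁} ⋯ dX^{f n}_{sₙ}`. -/
noncomputable def sig {d : ℕ} (X : ℝ → Fin d → ℝ) (s : ℝ) : (n : ℕ) → ℝ → Tensor d n
  | 0 => fun _ _ => 1
  | n + 1 => fun t f =>
      ∫ u in s..t, sig X s n u (fun i => f i.castSucc)
        * deriv (fun r => X r (f (Fin.last n))) u


/-! Level `n + 1` of the signature is the integral of level `n` against `dXⁱ`, so by induction
it suffices that the substitution `v = φ u` together with the chain rule
`d(Xⁱ ∘ φ) = ((Xⁱ)' ∘ φ) φ' du` carries the outer integral of `X ∘ φ` over `(s, t)` to that of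
`X` over `(φ s, φ t)`. -/

theorem continuous_sig {d : ℕ} {X : ℝ → Fin d → ℝ} (hX : ContDiff ℝ 1 X) (s : ℝ) (n : ℕ)
    (f : Fin n → Fin d) : Continuous (fun t => sig X s n t f) := by
  induction n with
  | zero => exact continuous_const
  | succ n ih =>
    have hXi := (contDiff_pi.mp hX (f (Fin.last n))).continuous_deriv le_rfl
    exact continuous_primitive (fun a b => ((ih _).mul hXi).intervalIntegrable a b) s

theorem sig_comp {d : ℕ} {X : ℝ → Fin d → ℝ} (hX : ContDiff ℝ 1 X) {φ : ℝ → ℝ}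
    (hφ : ContDiff ℝ 1 φ) (s : ℝ) (n : ℕ) (f : Fin n → Fin d) (t : ℝ) :
    sig (fun r => X (φ r)) s n t f = sig X (φ s) n (φ t) f := by
  induction n generalizing t with
  | zero => rfl
  | succ n ih =>
    set g : Fin n → Fin d := fun j => f j.castSucc
    set Xi : ℝ → ℝ := fun r => X r (f (Fin.last n))
    have hXi : ContDiff ℝ 1 Xi := contDiff_pi.mp hX _
    have chain_rule (u : ℝ) : deriv (fun r => Xi (φ r)) u = deriv φ u • deriv Xi (φ u) := by
      rw [smul_eq_mul, mul_comm]
      exact deriv_comp u (hXi.differentiable one_ne_zero _) (hφ.differentiable one_ne_zero u)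
    calc sig (fun r => X (φ r)) s (n + 1) t f
        = ∫ u in s..t, deriv φ u • ((fun v => sig X (φ s) n v g * deriv Xi v) ∘ φ) u := by
          refine integral_congr fun u _ => ?_
          change sig _ s n u g * deriv (fun r => Xi (φ r)) u = _
          rw [chain_rule, ih, Function.comp_apply, smul_eq_mul, smul_eq_mul]
          ring
      _ = sig X (φ s) (n + 1) (φ t) f :=
          integral_deriv_smul_comp (fun u _ => (hφ.differentiable one_ne_zero u).hasDerivAt)
            (hφ.continuous_deriv le_rfl).continuousOn
            ((continuous_sig hX _ n g).mul (hXi.continuous_deriv le_rfl))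

theorem sig_reparametrization_invariant_general {d : ℕ} (T : ℝ)
    (X : ℝ → Fin d → ℝ) (hX : ContDiff ℝ 1 X)
    (φ : ℝ → ℝ) (hφ : ContDiff ℝ 1 φ)
    (hφ0 : φ 0 = 0) (hφT : φ T = T) :
    ∀ (n : ℕ) (f : Fin n → Fin d),
      sig (fun t => X (φ t)) 0 n T f = sig X 0 n T f := by
  intro n f
  simpa only [hφ0, hφT] using sig_comp hX hφ 0 n f T

/-- **Invariance of the signature under reparametrization**: if `X` is `C¹` and
`φ : [0,T] → [0,T]` is a `C¹` increasing bijection (with `φ 0 = 0`, `φ T = T`),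
then every iterated integral of `X ∘ φ` over `(0, T)` equals the corresponding
iterated integral of `X` over `(0, T)`. -/
theorem sig_reparametrization_invariant {d : ℕ} (T : ℝ) (hT : 0 < T)
    (X : ℝ → Fin d → ℝ) (hX : ContDiff ℝ 1 X)
    (φ : ℝ → ℝ) (hφ : ContDiff ℝ 1 φ)
    (hmono : StrictMonoOn φ (Set.Icc 0 T))
    (hφ0 : φ 0 = 0) (hφT : φ T = T) :
    ∀ (n : ℕ) (f : Fin n → Fin d),
      sig (fun t => X (φ t)) 0 n T f = sig X 0 n T f :=
  sig_reparametrization_invariant_general T X hX φ hφ hφ0 hφT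
end

section
/- If μ and ν are Borel probability measures on ℝ^d, each absolutely continuous with respect to Lebesgue measure, then there exists a measurable map H : ℝ^d → ℝ^d such that the pushforward of μ under H equals ν. -/
/-!
If `μ` is atomless, its distribution function `F` is continuous, so `F` pushes `μ` to the
uniform measure on `(0, 1)` (probability integral transform). The quantile function `Q` of `ν`,
a generalized inverse of its distribution function, pushes the uniform measure back to `ν`
(inverse transform sampling), so `Q ∘ F` transports `μ` to `ν` on `ℝ`. Every standard Borel
space, in particular `ℝ^d`, embeds measurably into `ℝ`, and a measure absolutely continuous with
respect to Lebesgue measure on `ℝ^d`, `d ≥ 1`, is atomless.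
-/

open MeasureTheory ProbabilityTheory Set Filter Topology

theorem volume_Ioo_zero_one_inter_Iic (c : ℝ) :
    volume (Ioo (0 : ℝ) 1 ∩ Iic c) = ENNReal.ofReal (min 1 c) := by
  rw [measure_congr ((Ioo_ae_eq_Ioc (μ := volume)).inter (ae_eq_refl (Iic c))), Ioc_inter_Iic,
    Real.volume_Ioc, sub_zero]

instance : IsProbabilityMeasure (volume.restrict (Ioo (0 : ℝ) 1)) :=
  ⟨by simp⟩

namespace ProbabilityTheory

section Cdf

variable (μ : Measure ℝ) [IsProbabilityMeasure μ]

theorem continuous_cdf [NullSingletonClass μ] : Continuous (cdf μ) := by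
  refine continuous_iff_continuousAt.2 fun x => continuousAt_iff_continuous_left_right.2
    ⟨?_, (cdf μ).right_continuous x⟩
  rw [← continuousWithinAt_Iio_iff_Iic, (monotone_cdf μ).continuousWithinAt_Iio_iff_leftLim_eq]
  have h := (cdf μ).measure_singleton x
  rw [measure_cdf, measure_singleton, eq_comm, ENNReal.ofReal_eq_zero, sub_nonpos] at h
  exact le_antisymm ((monotone_cdf μ).leftLim_le le_rfl) h

theorem measure_cdf_le_of_lt_one [NullSingletonClass μ] {c : ℝ} (hc : c < 1) :
    μ {x | cdf μ x ≤ c} = ENNReal.ofReal c := by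
  set S := {x | cdf μ x ≤ c}
  -- `S` is a closed lower set, hence `Iic (sSup S)`, and `cdf μ (sSup S) = c` by continuity.
  rcases S.eq_empty_or_nonempty with hS | hS
  · have hc0 : c ≤ 0 := ge_of_tendsto' (tendsto_cdf_atBot μ) fun x =>
      le_of_lt (not_le.1 fun hx => hS.subset hx)
    rw [hS, measure_empty, ENNReal.ofReal_of_nonpos hc0]
  obtain ⟨z, hz⟩ := ((tendsto_cdf_atTop μ).eventually_const_lt hc).exists
  have hbdd : BddAbove S := ⟨z, fun x hx => le_of_not_gt fun hzx =>
    (hz.trans_le ((monotone_cdf μ) hzx.le)).not_ge hx⟩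
  have hmem : sSup S ∈ S :=
    (isClosed_le (continuous_cdf μ) continuous_const).csSup_mem hS hbdd
  have hSeq : S = Iic (sSup S) :=
    Subset.antisymm (fun x hx => le_csSup hbdd hx) fun x hx => (monotone_cdf μ hx).trans hmem
  have hcdf : cdf μ (sSup S) = c := by
    refine le_antisymm hmem (not_lt.1 fun hlt => ?_)
    obtain ⟨y, hyc, hy⟩ := (((continuous_cdf μ).continuousAt.eventually_lt continuousAt_const
      hlt).filter_mono nhdsWithin_le_nhds |>.and (self_mem_nhdsWithin (s := Ioi (sSup S)))).exists
    exact (le_csSup hbdd hyc.le).not_gt hy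
  rw [hSeq, ← ofReal_cdf, hcdf]

end Cdf


theorem map_cdf_eq_volume_restrict (μ : Measure ℝ) [IsProbabilityMeasure μ]
    [NullSingletonClass μ] : μ.map (cdf μ) = volume.restrict (Ioo 0 1) := by
  have : IsProbabilityMeasure (μ.map (cdf μ)) :=
    Measure.isProbabilityMeasure_map (monotone_cdf μ).measurable.aemeasurable
  refine Measure.ext_of_Iic _ _ fun c => ?_
  rw [Measure.map_apply (monotone_cdf μ).measurable measurableSet_Iic,
    Measure.restrict_apply measurableSet_Iic, inter_comm, volume_Ioo_zero_one_inter_Iic]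
  rcases lt_or_ge c 1 with hc | hc
  · rw [min_eq_right hc.le]
    exact measure_cdf_le_of_lt_one μ hc
  · rw [min_eq_left hc, ENNReal.ofReal_one, ← measure_univ (μ := μ)]
    exact congrArg μ (eq_univ_of_forall fun x => (cdf_le_one μ x).trans hc)

/-- Only the values on `(0, 1)` matter: elsewhere the set is empty or unbounded below and
`sInf` returns its junk value `0`. -/
noncomputable def quantile (ν : Measure ℝ) (u : ℝ) : ℝ := sInf {x | u ≤ cdf ν x}

theorem quantile_le_iff (ν : Measure ℝ) {u : ℝ} (hu : u ∈ Ioo 0 1) (x : ℝ) :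
    quantile ν u ≤ x ↔ u ≤ cdf ν x := by
  set S := {x | u ≤ cdf ν x}
  have hne : S.Nonempty := ((tendsto_cdf_atTop ν).eventually_const_le hu.2).exists
  obtain ⟨x₀, hx₀⟩ := ((tendsto_cdf_atBot ν).eventually_lt_const hu.1).exists
  have hbdd : BddBelow S := ⟨x₀, fun x hx => le_of_not_gt fun hxx₀ =>
    (hx.trans ((monotone_cdf ν) hxx₀.le)).not_gt hx₀⟩
  refine ⟨fun h => (monotone_cdf ν h).trans' ?_, fun h => csInf_le hbdd h⟩
  refine ge_of_tendsto (((cdf ν).right_continuous _).mono Ioi_subset_Ici_self).tendsto ?_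
  filter_upwards [self_mem_nhdsWithin] with y hy
  obtain ⟨z, hz, hzy⟩ := exists_lt_of_csInf_lt hne hy
  exact hz.trans (monotone_cdf ν hzy.le)

theorem monotoneOn_quantile (ν : Measure ℝ) : MonotoneOn (quantile ν) (Ioo 0 1) :=
  fun _ hu _ hv huv => (quantile_le_iff ν hu _).2 (huv.trans ((quantile_le_iff ν hv _).1 le_rfl))

theorem aemeasurable_quantile (ν : Measure ℝ) :
    AEMeasurable (quantile ν) (volume.restrict (Ioo 0 1)) :=
  aemeasurable_restrict_of_monotoneOn measurableSet_Ioo (monotoneOn_quantile ν)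

theorem map_quantile_volume_restrict (ν : Measure ℝ) [IsProbabilityMeasure ν] :
    (volume.restrict (Ioo 0 1)).map (quantile ν) = ν := by
  have hQ := aemeasurable_quantile ν
  have : IsProbabilityMeasure ((volume.restrict (Ioo 0 1)).map (quantile ν)) :=
    Measure.isProbabilityMeasure_map hQ
  refine Measure.ext_of_Iic _ _ fun x => ?_
  rw [Measure.map_apply_of_aemeasurable hQ measurableSet_Iic,
    Measure.restrict_apply' measurableSet_Ioo]
  have : quantile ν ⁻¹' Iic x ∩ Ioo 0 1 = Ioo 0 1 ∩ Iic (cdf ν x) := by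
    ext u
    simp only [mem_inter_iff, mem_preimage, mem_Iic]
    exact ⟨fun h => ⟨h.2, (quantile_le_iff ν h.2 x).1 h.1⟩,
      fun h => ⟨(quantile_le_iff ν h.1 x).2 h.2, h.1⟩⟩
  rw [this, volume_Ioo_zero_one_inter_Iic, min_eq_right (cdf_le_one ν x), ofReal_cdf]

theorem exists_measurable_map_eq_real (μ ν : Measure ℝ) [IsProbabilityMeasure μ]
    [IsProbabilityMeasure ν] [NullSingletonClass μ] :
    ∃ H : ℝ → ℝ, Measurable H ∧ μ.map H = ν := by
  have hF : Measurable (cdf μ) := (monotone_cdf μ).measurable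
  have hQ : AEMeasurable (quantile ν) (μ.map (cdf μ)) := by
    rw [map_cdf_eq_volume_restrict]
    exact aemeasurable_quantile ν
  have hH := hQ.comp_measurable hF
  refine ⟨hH.mk, hH.measurable_mk, ?_⟩
  rw [← Measure.map_congr hH.ae_eq_mk, ← hQ.map_map_of_aemeasurable hF.aemeasurable,
    map_cdf_eq_volume_restrict, map_quantile_volume_restrict]

end ProbabilityTheory

theorem MeasurableEmbedding.nullSingletonClass_map {α β : Type*} [MeasurableSpace α]
    [MeasurableSpace β] [MeasurableSingletonClass β] {f : α → β} (hf : MeasurableEmbedding f)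
    (μ : Measure α) [NullSingletonClass μ] : NullSingletonClass (μ.map f) :=
  ⟨fun x => by
    rw [hf.map_apply]
    exact (subsingleton_singleton.preimage hf.injective).measure_zero μ⟩

theorem exists_measurable_map_eq_of_nullSingletonClass {α β : Type*} [MeasurableSpace α]
    [StandardBorelSpace α] [MeasurableSpace β] [StandardBorelSpace β] (μ : Measure α)
    (ν : Measure β) [IsProbabilityMeasure μ] [IsProbabilityMeasure ν] [NullSingletonClass μ] :
    ∃ H : α → β, Measurable H ∧ μ.map H = ν := by
  have he := measurableEmbedding_embeddingReal α
  have hg := measurableEmbedding_embeddingReal β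
  have : Nonempty β := nonempty_of_isProbabilityMeasure ν
  have := he.nullSingletonClass_map μ
  have := Measure.isProbabilityMeasure_map (μ := μ) he.measurable.aemeasurable
  have := Measure.isProbabilityMeasure_map (μ := ν) hg.measurable.aemeasurable
  obtain ⟨H, hH, hmap⟩ :=
    exists_measurable_map_eq_real (μ.map (embeddingReal α)) (ν.map (embeddingReal β))
  refine ⟨hg.invFun ∘ H ∘ embeddingReal α, hg.measurable_invFun.comp (hH.comp he.measurable), ?_⟩
  rw [← Measure.map_map hg.measurable_invFun (hH.comp he.measurable),
    ← Measure.map_map hH he.measurable, hmap, Measure.map_map hg.measurable_invFun hg.measurable,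
    hg.leftInverse_invFun.comp_eq_id, Measure.map_id]

theorem exists_transport_map_general {d : ℕ}
    (μ ν : Measure (Fin d → ℝ)) [IsProbabilityMeasure μ] [IsProbabilityMeasure ν]
    (hμ : μ ≪ volume) :
    ∃ H : (Fin d → ℝ) → (Fin d → ℝ), Measurable H ∧ μ.map H = ν := by
  rcases isEmpty_or_nonempty (Fin d) with hd | hd
  · -- `ℝ^0` is a point, so `μ = ν`.
    refine ⟨id, measurable_id, Measure.ext fun s _ => ?_⟩
    rcases s.eq_empty_or_nonempty with rfl | hs
    · simp
    · simp [hs.eq_univ]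
  · have : NullSingletonClass μ := ⟨fun x => hμ (measure_singleton x)⟩
    exact exists_measurable_map_eq_of_nullSingletonClass μ ν

/-- Existence of a transport map: if `μ` and `ν` are Borel probability measures on
`ℝ^d`, each absolutely continuous with respect to Lebesgue measure, then there is a
measurable map `H : ℝ^d → ℝ^d` pushing `μ` forward to `ν`. -/
theorem exists_transport_map {d : ℕ}
    (μ ν : Measure (Fin d → ℝ)) [IsProbabilityMeasure μ] [IsProbabilityMeasure ν]
    (hμ : μ ≪ volume) (hν : ν ≪ volume) :
    ∃ H : (Fin d → ℝ) → (Fin d → ℝ), Measurable H ∧ μ.map H = ν :=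
  exists_transport_map_general μ ν hμ
end

section
/- Linear functionals on truncated signatures form an algebra point-wise on group-like elements (shuffle-type closure at level of linear maps on the full tensor algebra): for any two linear functionals e*_I, e*_J ∈ (T((ℝ^d)))* given by dual basis coordinate projections of lengths m and n, and any C¹ path X, the product e*_I(X)·e*_J(X) of the corresponding iterated integrals over (0,T) equals the sum over all (m,n)-shuffles σ of e*_{σ(I,J)}(X). In the simplest nontrivial case m = n = 1: (∫_0^T dX^i)·(∫_0^T dX^j) = ∫_0^T ∫_0^{t} dX^i_s dX^j_t + ∫_0^T ∫_0^{t} dX^j_s dX^i_t. -/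
/-!
Both level-two terms are integrals of `x · y'` with `x, y` coordinates of `X` recentred at the
starting point, so their sum is `∫ (x y)'`, which is `x(T) y(T)` because `x y` vanishes at `0`:
the shuffle identity at level one is integration by parts.
-/

open intervalIntegral

section Signature

variable {d : ℕ} {X : ℝ → Fin d → ℝ} {s t : ℝ}

theorem sig_succ (n : ℕ) (f : Fin (n + 1) → Fin d) :
    sig X s (n + 1) t f
      = ∫ u in s..t, sig X s n u (fun i => f i.castSucc)
          * deriv (fun r => X r (f (Fin.last n))) u :=
  rfl

theorem sig_one_eq_sub {f : Fin 1 → Fin d} (hf : ContDiff ℝ 1 fun r => X r (f 0)) :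
    sig X s 1 t f = X t (f 0) - X s (f 0) := by
  rw [sig_succ]
  simp only [sig, one_mul]
  exact integral_deriv_eq_sub (fun u _ => hf.differentiable one_ne_zero u)
    ((hf.continuous_deriv le_rfl).intervalIntegrable s t)

theorem sig_two_eq_integral {a b : Fin d} (ha : ContDiff ℝ 1 fun r => X r a) :
    sig X s 2 t ![a, b] = ∫ u in s..t, (X u a - X s a) * deriv (fun r => X r b) u := by
  rw [sig_succ]
  refine integral_congr fun u _ => ?_
  rw [sig_one_eq_sub ha]
  rfl

end Signature

theorem integral_sub_mul_deriv_add_integral_sub_mul_deriv {x y : ℝ → ℝ}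
    (hx : ContDiff ℝ 1 x) (hy : ContDiff ℝ 1 y) (s t : ℝ) :
    (∫ u in s..t, (x u - x s) * deriv y u) + ∫ u in s..t, (y u - y s) * deriv x u
      = (x t - x s) * (y t - y s) := by
  have hx' : ∀ u, HasDerivAt (fun r => x r - x s) (deriv x u) u := fun u =>
    ((hx.differentiable one_ne_zero u).hasDerivAt).sub_const _
  have hy' : ∀ u, HasDerivAt (fun r => y r - y s) (deriv y u) u := fun u =>
    ((hy.differentiable one_ne_zero u).hasDerivAt).sub_const _
  have by_parts := integral_mul_deriv_eq_deriv_mul (fun u _ => hx' u) (fun u _ => hy' u)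
    ((hx.continuous_deriv le_rfl).intervalIntegrable s t)
    ((hy.continuous_deriv le_rfl).intervalIntegrable s t)
  simp only [sub_self, mul_zero, sub_zero] at by_parts
  simp only [by_parts, mul_comm (y _ - y s)]
  ring

/-- Shuffle-product identity for coordinate (dual-basis) functionals on the
signature, in the simplest nontrivial case `m = n = 1`: for a `C¹` path `X` and
coordinates `i, j`, the product of the level-one iterated integrals equals the sum
over the two `(1,1)`-shuffles of the level-two iterated integrals:
`(∫_0^T dX^i) · (∫_0^T dX^j) = ∫_0^T ∫_0^t dX^i_s dX^j_t + ∫_0^T ∫_0^t dX^j_s dX^i_t`,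
i.e. `(X^i_T − X^i_0)(X^j_T − X^j_0) = X^{(ij)} + X^{(ji)}`. -/
theorem shuffle_identity_level_one {d : ℕ} (T : ℝ) (X : ℝ → Fin d → ℝ)
    (hX : ContDiff ℝ 1 X) (i j : Fin d) :
    sig X 0 1 T ![i] * sig X 0 1 T ![j]
      = sig X 0 2 T ![i, j] + sig X 0 2 T ![j, i] := by
  have hcoord := contDiff_pi.1 hX
  rw [sig_one_eq_sub (hcoord _), sig_one_eq_sub (hcoord _),
    sig_two_eq_integral (hcoord _), sig_two_eq_integral (hcoord _)]
  exact (integral_sub_mul_deriv_add_integral_sub_mul_deriv (hcoord i) (hcoord j) 0 T).symm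
end
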